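/- For b ≥ 5 and any a with 2 ≤ a ≤ b-2 and gcd(a,b) = 1, one has (b²-1)/8 ≤ inv(a,b) ≤ (3b² - 12b + 9)/8. -/

import Mathlib

/-!
Write `q k = ⌊a k / b⌋`. For `i < j < b` the pair `(i, j)` is an inversion exactly when adding
`a i` and `a (j - i)` carries past a multiple of `b`, i.e. when `q j - q i - q (j - i) = 1`;
summing over pairs gives `inv(a,b) = 3 ∑ k q k - (2b - 1) ∑ q k`. As `k ↦ a k mod b` permutes
`range b`, comparing `∑ (a k - b q k)` and `∑ (a k - b q k)²` with `∑ k` and `∑ k²` yields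
`∑ q k = (a-1)(b-1)/2` and, together with counting the lattice points on either side of the
line `a x = b y`, the reciprocity law `a inv(a,b) + b inv(b,a) = (a-1)(b-1)(a+b-1)/4`.

For `2a < b` both bounds follow from reciprocity and `0 ≤ inv(b,a) ≤ (a-1)(a-2)/2`. This upper
bound and the case `2a > b` (pass to `b - a`) both come from `inv(c,b) + inv(b-c,b) = (b-1)(b-2)/2`,
a consequence of `⌊c k / b⌋ + ⌊(b - c) k / b⌋ = k - 1` for `0 < k < b`.
-/

/-- The sawtooth function ((x)): 0 if x is an integer, else x - ⌊x⌋ - 1/2. -/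
def sawtooth (x : ℚ) : ℚ := if x.den = 1 then 0 else x - ⌊x⌋ - 1/2

/-- The Dedekind sum s(a,b) = ∑_{i=1}^{b-1} (i/b)·((a·i/b)). -/
def dedekindSum (a b : ℕ) : ℚ :=
  ∑ i ∈ Finset.Icc 1 (b - 1), (i : ℚ) / (b : ℚ) * sawtooth ((a * i : ℕ) / (b : ℚ))

/-- Representative of a·x mod b in {1, ..., b}. -/
def modRep (a b x : ℕ) : ℕ := if a * x % b = 0 then b else a * x % b

/-- inv(a,b): number of pairs 1 ≤ i < j ≤ b with a·i mod b > a·j mod b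
(representatives in {1,...,b}). -/
def invNum (a b : ℕ) : ℕ :=
  ((Finset.Icc 1 b ×ˢ Finset.Icc 1 b).filter
    (fun p => p.1 < p.2 ∧ modRep a b p.2 < modRep a b p.1)).card

open Finset

namespace Nat

theorem mul_mod_ne_zero_of_coprime {a b k : ℕ} (h : a.Coprime b) (hk0 : 0 < k) (hkb : k < b) :
    a * k % b ≠ 0 := fun hdvd =>
  absurd (Nat.le_of_dvd hk0 (h.symm.dvd_of_dvd_mul_left (Nat.dvd_of_mod_eq_zero hdvd))) (by omega)

theorem add_mod_lt_mod_iff {x y b : ℕ} (hb : 0 < b) :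
    (x + y) % b < x % b ↔ b ≤ x % b + y % b := by
  have hsum := add_mod_add_ite x y b
  have hy := mod_lt y hb
  split_ifs at hsum <;> omega

theorem add_div_eq_add_ite_mod_lt {x y b : ℕ} (hb : 0 < b) :
    (x + y) / b = x / b + y / b + if (x + y) % b < x % b then 1 else 0 := by
  rw [Nat.add_div hb, if_congr (Nat.add_mod_lt_mod_iff hb).symm rfl rfl]

theorem div_add_sub_mul_div_add_one {a b k : ℕ} (hab : a ≤ b) (hk : ¬b ∣ a * k) :
    a * k / b + (b - a) * k / b + 1 = k := by
  have hsum : a * k + (b - a) * k = b * k := by rw [← add_mul, Nat.add_sub_cancel' hab]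
  have hb : 0 < b := Nat.pos_of_ne_zero <| by rintro rfl; simp_all
  rw [← Nat.add_div_eq_of_le_mod_add_mod (le_mod_add_mod_of_dvd_add_of_not_dvd ⟨k, hsum⟩ hk) hb,
    hsum, Nat.mul_div_cancel_left k hb]

end Nat

theorem sum_range_id_mul_two_int (n : ℕ) : (∑ k ∈ range n, (k : ℤ)) * 2 = n * (n - 1) := by
  induction n with
  | zero => simp
  | succ n ih => rw [sum_range_succ, add_mul, ih]; push_cast; ring

theorem sum_range_sq_mul_six_int (n : ℕ) :
    (∑ k ∈ range n, (k : ℤ) ^ 2) * 6 = n * (n - 1) * (2 * n - 1) := by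
  induction n with
  | zero => simp
  | succ n ih => rw [sum_range_succ, add_mul, ih]; push_cast; ring

theorem sum_Ioc_two_mul_sub_one (n : ℕ) : ∑ j ∈ Ioc 0 n, (2 * (j : ℤ) - 1) = n ^ 2 := by
  induction n with
  | zero => simp
  | succ n ih => rw [sum_Ioc_succ_top n.zero_le, ih]; push_cast; ring

theorem sum_Ioo_zero_eq_sum_range {M : Type*} [AddCommMonoid M] (f : ℕ → M) (hf : f 0 = 0)
    (n : ℕ) : ∑ k ∈ Ioo 0 n, f k = ∑ k ∈ range n, f k :=
  sum_subset (fun k hk => mem_range.2 (mem_Ioo.1 hk).2) fun k hk hk' => by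
    obtain rfl : k = 0 := by simp at hk hk'; omega
    exact hf

theorem sum_range_mul_mod {M : Type*} [AddCommMonoid M] {a b : ℕ} (h : a.Coprime b)
    (f : ℕ → M) : ∑ k ∈ range b, f (a * k % b) = ∑ k ∈ range b, f k := by
  have hinj : Set.InjOn (a * · % b) (range b) := fun i hi j hj hij =>
    (Nat.ModEq.cancel_left_of_coprime h.symm hij).eq_of_lt_of_lt
      (mem_range.1 hi) (mem_range.1 hj)
  have himage : (range b).image (a * · % b) = range b :=
    eq_of_subset_of_card_le
      (fun x hx => by
        obtain ⟨k, hk, rfl⟩ := mem_image.1 hx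
        exact mem_range.2 (Nat.mod_lt _ (by have := mem_range.1 hk; omega)))
      (card_image_of_injOn hinj).ge
  rw [← sum_image hinj, himage]

theorem sum_range_sum_range_sub (g : ℕ → ℤ) (hg : g 0 = 0) (n : ℕ) :
    ∑ j ∈ range n, ∑ i ∈ range j, (g j - g i - g (j - i)) =
      ∑ k ∈ range n, (3 * k - 2 * n + 1) * g k := by
  induction n with
  | zero => simp
  | succ n ih =>
    have hreflect : ∑ i ∈ range n, g (n - i) = ∑ k ∈ range n, g k + g n := by
      rw [← sum_range_reflect, ← sum_range_succ, sum_range_succ', hg, add_zero]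
      exact sum_congr rfl fun k hk => by rw [mem_range] at hk; congr 1; omega
    have hcoeff : ∑ k ∈ range n, (3 * k - 2 * (n + 1 : ℕ) + 1) * g k =
        ∑ k ∈ range n, (3 * k - 2 * n + 1) * g k - 2 * ∑ k ∈ range n, g k := by
      rw [mul_sum, ← sum_sub_distrib]
      exact sum_congr rfl fun _ _ => by push_cast; ring
    rw [sum_range_succ, ih, sum_range_succ _ n, hcoeff, sum_sub_distrib, sum_sub_distrib, hreflect,
      sum_const, card_range, nsmul_eq_mul]
    push_cast
    ring

theorem Ioc_zero_div_eq_filter {a b i : ℕ} (h : a.Coprime b) (hi : i < b) :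
    Ioc 0 (a * i / b) = {j ∈ Ioo 0 a | b * j < a * i} := by
  have hb : 0 < b := by omega
  ext j
  simp only [mem_Ioc, mem_filter, mem_Ioo, Nat.le_div_iff_mul_le hb, mul_comm j b]
  constructor
  · rintro ⟨hj, hle⟩
    have hne : b * j ≠ a * i := fun heq => by
      have hi0 : i = 0 := Nat.eq_zero_of_dvd_of_lt (h.symm.dvd_of_dvd_mul_left ⟨j, heq.symm⟩) hi
      simp [hi0] at heq
      omega
    have hlt : b * j < b * a := by
      calc b * j < a * i := lt_of_le_of_ne hle hne
        _ ≤ a * b := Nat.mul_le_mul_left a hi.le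
        _ = b * a := mul_comm a b
    exact ⟨⟨hj, Nat.lt_of_mul_lt_mul_left hlt⟩, lt_of_le_of_ne hle hne⟩
  · rintro ⟨⟨hj, -⟩, hlt⟩
    exact ⟨hj, hlt.le⟩

/-- No lattice point of the open rectangle lies on the line `a i = b j`, so each lies strictly
below or strictly above it. -/
theorem sum_Ioc_div_add_sum_Ioc_div {M : Type*} [AddCommMonoid M] {a b : ℕ} (h : a.Coprime b)
    (g : ℕ → ℕ → M) :
    ∑ i ∈ Ioo 0 b, ∑ j ∈ Ioc 0 (a * i / b), g i j + ∑ j ∈ Ioo 0 a, ∑ i ∈ Ioc 0 (b * j / a), g i j =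
      ∑ i ∈ Ioo 0 b, ∑ j ∈ Ioo 0 a, g i j := by
  have hrows : ∀ i ∈ Ioo 0 b, ∑ j ∈ Ioc 0 (a * i / b), g i j =
      ∑ j ∈ Ioo 0 a, if b * j < a * i then g i j else 0 := fun i hi => by
    rw [Ioc_zero_div_eq_filter h (mem_Ioo.1 hi).2, sum_filter]
  have hcols : ∀ j ∈ Ioo 0 a, ∑ i ∈ Ioc 0 (b * j / a), g i j =
      ∑ i ∈ Ioo 0 b, if a * i < b * j then g i j else 0 := fun j hj => by
    rw [Ioc_zero_div_eq_filter h.symm (mem_Ioo.1 hj).2, sum_filter]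
  rw [sum_congr rfl hrows, sum_congr rfl hcols, sum_comm (s := Ioo 0 a), ← sum_add_distrib]
  refine sum_congr rfl fun i hi => ?_
  rw [← sum_add_distrib]
  refine sum_congr rfl fun j _ => ?_
  have hne : a * i ≠ b * j := fun heq =>
    Nat.mul_mod_ne_zero_of_coprime h (mem_Ioo.1 hi).1 (mem_Ioo.1 hi).2 (by simp [heq])
  rcases hne.lt_or_gt with hlt | hlt <;> simp [hlt, hlt.not_gt]

def floorSum (a b : ℕ) : ℤ := ∑ k ∈ range b, ((a * k / b : ℕ) : ℤ)

def weightedFloorSum (a b : ℕ) : ℤ := ∑ k ∈ range b, (k : ℤ) * ((a * k / b : ℕ) : ℤ)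

section FloorSums

variable {a b : ℕ}

theorem cast_mul_eq_div_add_mod (k : ℕ) :
    (a : ℤ) * k = b * ((a * k / b : ℕ) : ℤ) + ((a * k % b : ℕ) : ℤ) := by
  exact_mod_cast (Nat.div_add_mod (a * k) b).symm

theorem two_mul_floorSum (h : a.Coprime b) (hb : 0 < b) :
    2 * floorSum a b = (a - 1) * (b - 1) := by
  have hsum : a * ∑ k ∈ range b, (k : ℤ) = b * floorSum a b + ∑ k ∈ range b, (k : ℤ) := by
    rw [floorSum, mul_sum, mul_sum, ← sum_range_mul_mod h (fun k => (k : ℤ)), ← sum_add_distrib]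
    exact sum_congr rfl fun k _ => cast_mul_eq_div_add_mod k
  have hgauss := sum_range_id_mul_two_int b
  have hb' : (b : ℤ) ≠ 0 := by positivity
  apply mul_left_cancel₀ hb'
  linear_combination -2 * hsum + (a - 1) * hgauss

theorem sq_mul_sum_div_sq (h : a.Coprime b) :
    (b : ℤ) ^ 2 * ∑ k ∈ range b, ((a * k / b : ℕ) : ℤ) ^ 2 =
      2 * a * b * weightedFloorSum a b - (a ^ 2 - 1) * ∑ k ∈ range b, (k : ℤ) ^ 2 := by
  have hsq := sum_range_mul_mod h (fun k => (k : ℤ) ^ 2)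
  have hexpand : ∀ k ∈ range b, ((a * k % b : ℕ) : ℤ) ^ 2 =
      a ^ 2 * k ^ 2 - 2 * a * b * (k * ((a * k / b : ℕ) : ℤ)) + b ^ 2 * ((a * k / b : ℕ) : ℤ) ^ 2 :=
    fun k _ => by rw [eq_sub_of_add_eq' (cast_mul_eq_div_add_mod k).symm]; ring
  rw [sum_congr rfl hexpand, sum_add_distrib, sum_sub_distrib, ← mul_sum, ← mul_sum,
    ← mul_sum] at hsq
  rw [weightedFloorSum]
  linear_combination hsq

theorem sum_div_sq_add_two_mul_weightedFloorSum (h : a.Coprime b) (ha : 0 < a) (hb : 0 < b) :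
    ∑ k ∈ range b, ((a * k / b : ℕ) : ℤ) ^ 2 + 2 * weightedFloorSum b a - floorSum b a =
      (b - 1) * (a - 1) ^ 2 := by
  have hrect : ∑ i ∈ Ioo 0 b, ∑ j ∈ Ioo 0 a, (2 * (j : ℤ) - 1) = (b - 1) * (a - 1) ^ 2 := by
    have hIoo : Ioo 0 a = Ioc 0 (a - 1) := by ext; simp; omega
    rw [hIoo, sum_Ioc_two_mul_sub_one, sum_const, Nat.card_Ioo, Nat.sub_zero, nsmul_eq_mul]
    push_cast [Nat.cast_sub ha, Nat.cast_sub hb]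
    ring
  rw [← hrect, ← sum_Ioc_div_add_sum_Ioc_div h]
  simp only [sum_Ioc_two_mul_sub_one, sum_const, Nat.card_Ioc, Nat.sub_zero, nsmul_eq_mul]
  rw [sum_Ioo_zero_eq_sum_range _ (by simp), sum_Ioo_zero_eq_sum_range _ (by simp),
    weightedFloorSum, floorSum, mul_sum, add_sub_assoc, ← sum_sub_distrib]
  exact congrArg _ (sum_congr rfl fun _ _ => by ring)

theorem weightedFloorSum_reciprocity (h : a.Coprime b) (ha : 0 < a) (hb : 0 < b) :
    12 * (a * weightedFloorSum a b + b * weightedFloorSum b a) =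
      (a - 1) * (b - 1) * (8 * a * b - a - b - 1) := by
  have hsq := sq_mul_sum_div_sq h
  have hswap := sum_div_sq_add_two_mul_weightedFloorSum h ha hb
  have hfloor := two_mul_floorSum h.symm ha
  have hsum := sum_range_sq_mul_six_int b
  have hb' : (b : ℤ) ≠ 0 := by positivity
  apply mul_left_cancel₀ hb'
  linear_combination -6 * hsq + 6 * (b : ℤ) ^ 2 * hswap + 3 * (b : ℤ) ^ 2 * hfloor +
    ((a : ℤ) ^ 2 - 1) * hsum

end FloorSums

section modRep

variable {a b x : ℕ}

theorem modRep_of_pos_of_lt (h : a.Coprime b) (hx0 : 0 < x) (hxb : x < b) :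
    modRep a b x = a * x % b :=
  if_neg (Nat.mul_mod_ne_zero_of_coprime h hx0 hxb)

theorem modRep_self : modRep a b b = b :=
  if_pos (Nat.mul_mod_left a b)

theorem modRep_le (hb : 0 < b) : modRep a b x ≤ b := by
  unfold modRep
  split_ifs
  exacts [le_rfl, (Nat.mod_lt _ hb).le]

end modRep

/-- Moving the last position `b`, which carries the largest value `b`, to a first position `0`
carrying the smallest value `0` creates no inversion. -/
theorem invNum_eq_card {a b : ℕ} (h : a.Coprime b) :
    invNum a b = #{p ∈ range b ×ˢ range b | p.1 < p.2 ∧ a * p.2 % b < a * p.1 % b} := by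
  unfold invNum
  congr 1
  ext ⟨i, j⟩
  simp only [mem_filter, mem_product, mem_Icc, mem_range]
  constructor
  · rintro ⟨⟨⟨hi, -⟩, -, hjb⟩, hij, hlt⟩
    have hjb : j < b := lt_of_le_of_ne hjb <| by
      rintro rfl
      exact (modRep_le (by omega)).not_gt (modRep_self (a := a) ▸ hlt)
    rw [modRep_of_pos_of_lt h (by omega) hjb, modRep_of_pos_of_lt h hi (by omega)] at hlt
    exact ⟨⟨by omega, hjb⟩, hij, hlt⟩
  · rintro ⟨⟨-, hjb⟩, hij, hlt⟩
    have hi : 0 < i := Nat.pos_of_ne_zero <| by rintro rfl; simp at hlt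
    rw [← modRep_of_pos_of_lt h (by omega) hjb, ← modRep_of_pos_of_lt h hi (by omega)] at hlt
    exact ⟨⟨⟨hi, by omega⟩, by omega, hjb.le⟩, hij, hlt⟩

theorem ite_mul_mod_lt_eq {a b i j : ℕ} (hb : 0 < b) (hij : i ≤ j) :
    (if a * j % b < a * i % b then 1 else 0 : ℤ) =
      ((a * j / b : ℕ) : ℤ) - ((a * i / b : ℕ) : ℤ) - ((a * (j - i) / b : ℕ) : ℤ) := by
  have hdiv := Nat.add_div_eq_add_ite_mod_lt (x := a * i) (y := a * (j - i)) hb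
  rw [← mul_add, Nat.add_sub_cancel' hij] at hdiv
  rw [hdiv]
  split_ifs <;> push_cast <;> ring

theorem invNum_eq_floorSum {a b : ℕ} (h : a.Coprime b) :
    (invNum a b : ℤ) = 3 * weightedFloorSum a b - (2 * b - 1) * floorSum a b := by
  rw [invNum_eq_card h, card_filter, sum_product_right]
  push_cast
  calc ∑ j ∈ range b, ∑ i ∈ range b, (if i < j ∧ a * j % b < a * i % b then 1 else 0 : ℤ)
      = ∑ j ∈ range b, ∑ i ∈ range j,
          (((a * j / b : ℕ) : ℤ) - ((a * i / b : ℕ) : ℤ) - ((a * (j - i) / b : ℕ) : ℤ)) := by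
        refine sum_congr rfl fun j hj => ?_
        rw [← sum_range_add_sum_Ico _ (mem_range.1 hj).le]
        rw [sum_eq_zero (s := Ico j b) fun i hi => if_neg fun hlt => by simp at hi; omega, add_zero]
        refine sum_congr rfl fun i hi => ?_
        rw [mem_range] at hi hj
        rw [← ite_mul_mod_lt_eq (by omega) hi.le]
        simp [hi]
    _ = ∑ k ∈ range b, (3 * k - 2 * b + 1) * ((a * k / b : ℕ) : ℤ) :=
        sum_range_sum_range_sub (fun k => ((a * k / b : ℕ) : ℤ)) (by simp) b
    _ = 3 * weightedFloorSum a b - (2 * b - 1) * floorSum a b := by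
        rw [weightedFloorSum, floorSum, mul_sum, mul_sum, ← sum_sub_distrib]
        exact sum_congr rfl fun _ _ => by ring

theorem invNum_reciprocity {a b : ℕ} (h : a.Coprime b) (ha : 0 < a) (hb : 0 < b) :
    4 * (a * (invNum a b : ℤ) + b * invNum b a) = (a - 1) * (b - 1) * (a + b - 1) := by
  rw [invNum_eq_floorSum h, invNum_eq_floorSum h.symm]
  linear_combination weightedFloorSum_reciprocity h ha hb -
    2 * (a : ℤ) * (2 * b - 1) * two_mul_floorSum h hb -
    2 * (b : ℤ) * (2 * a - 1) * two_mul_floorSum h.symm ha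

theorem invNum_add_invNum_sub {a b : ℕ} (h : a.Coprime b) (hab : a < b) :
    2 * ((invNum a b : ℤ) + invNum (b - a) b) = (b - 1) * (b - 2) := by
  have h' : (b - a).Coprime b := (Nat.coprime_self_sub_left hab.le).2 h
  have hweighted : weightedFloorSum a b + weightedFloorSum (b - a) b =
      ∑ k ∈ range b, (k : ℤ) ^ 2 - ∑ k ∈ range b, (k : ℤ) := by
    rw [weightedFloorSum, weightedFloorSum, ← sum_add_distrib, ← sum_sub_distrib]
    refine sum_congr rfl fun k hk => ?_
    rcases Nat.eq_zero_or_pos k with rfl | hk0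
    · simp
    have hdiv := Nat.div_add_sub_mul_div_add_one hab.le
      (Nat.mul_mod_ne_zero_of_coprime h hk0 (mem_range.1 hk) ∘ Nat.mod_eq_zero_of_dvd)
    have hdiv' : ((a * k / b : ℕ) : ℤ) + (((b - a) * k / b : ℕ) : ℤ) + 1 = k := by
      exact_mod_cast hdiv
    linear_combination (k : ℤ) * hdiv'
  rw [invNum_eq_floorSum h, invNum_eq_floorSum h']
  have hfloor := two_mul_floorSum h (by omega)
  have hfloor' := two_mul_floorSum h' (by omega)
  rw [Nat.cast_sub hab.le] at hfloor'
  linear_combination 6 * hweighted - (2 * (b : ℤ) - 1) * (hfloor + hfloor') +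
    sum_range_sq_mul_six_int b - 3 * sum_range_id_mul_two_int b

theorem invNum_mod_left (a b : ℕ) : invNum (a % b) b = invNum a b := by
  have hrep : modRep (a % b) b = modRep a b :=
    funext fun x => by simp only [modRep, Nat.mod_mul_mod]
  rw [invNum, hrep, invNum]

theorem two_mul_invNum_le {a b : ℕ} (h : a.Coprime b) (hb : 0 < b) :
    2 * (invNum a b : ℤ) ≤ (b - 1) * (b - 2) := by
  have h' : (a % b).Coprime b := (ZMod.coprime_mod_iff_coprime a b).2 h
  rw [← invNum_add_invNum_sub h' (Nat.mod_lt a hb), invNum_mod_left]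
  have := (invNum (b - a % b) b).cast_nonneg (α := ℤ)
  linarith

theorem invNum_bounds_of_two_mul_lt {a b : ℕ} (h : a.Coprime b) (ha : 2 ≤ a) (hab : 2 * a < b) :
    (b : ℤ) ^ 2 - 1 ≤ 8 * invNum a b ∧ 8 * (invNum a b : ℤ) ≤ 3 * b ^ 2 - 12 * b + 9 := by
  have hrec := invNum_reciprocity h (by omega) (by omega)
  have hle := two_mul_invNum_le h.symm (by omega)
  have hnonneg := (invNum b a).cast_nonneg (α := ℤ)
  have ha' : (2 : ℤ) ≤ a := by exact_mod_cast ha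
  have hab' : 2 * (a : ℤ) < b := by exact_mod_cast hab
  constructor
  · refine le_of_mul_le_mul_left ?_ (by omega : (0 : ℤ) < a)
    linarith [mul_le_mul_of_nonneg_left hle (by positivity : (0 : ℤ) ≤ b),
      mul_nonneg (mul_nonneg (by linarith : (0 : ℤ) ≤ b + 1) (by linarith : (0 : ℤ) ≤ a - 2))
        (by linarith : (0 : ℤ) ≤ b - 2 * a + 1)]
  · refine le_of_mul_le_mul_left ?_ (by omega : (0 : ℤ) < a)
    linarith [mul_nonneg (by positivity : (0 : ℤ) ≤ b) hnonneg,
      mul_nonneg (mul_nonneg (by linarith : (0 : ℤ) ≤ b - 1) (by linarith : (0 : ℤ) ≤ a + 2))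
        (by linarith : (0 : ℤ) ≤ b - 2 * a - 1)]

theorem invNum_bounds {a b : ℕ} (h : a.Coprime b) (ha : 2 ≤ a) (hab : a ≤ b - 2) :
    (b : ℤ) ^ 2 - 1 ≤ 8 * invNum a b ∧ 8 * (invNum a b : ℤ) ≤ 3 * b ^ 2 - 12 * b + 9 := by
  have hne : 2 * a ≠ b := by
    rintro rfl
    have := (Nat.coprime_self a).1 (h.coprime_dvd_right (dvd_mul_left a 2))
    omega
  rcases hne.lt_or_gt with hlt | hgt
  · exact invNum_bounds_of_two_mul_lt h ha hlt
  · have h' : (b - a).Coprime b := (Nat.coprime_self_sub_left (by omega)).2 h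
    obtain ⟨hlower, hupper⟩ := invNum_bounds_of_two_mul_lt h' (by omega) (by omega)
    have hsym := invNum_add_invNum_sub h (by omega)
    constructor <;> linarith

theorem stmt10_general (a b : ℕ) (ha2 : 2 ≤ a) (hab : a ≤ b - 2)
    (h : Nat.Coprime a b) :
    ((b : ℚ) ^ 2 - 1) / 8 ≤ (invNum a b : ℚ) ∧
      (invNum a b : ℚ) ≤ (3 * (b : ℚ) ^ 2 - 12 * b + 9) / 8 := by
  obtain ⟨hlower, hupper⟩ := invNum_bounds h ha2 hab
  have hlower' : (b : ℚ) ^ 2 - 1 ≤ 8 * invNum a b := by exact_mod_cast hlower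
  have hupper' : 8 * (invNum a b : ℚ) ≤ 3 * b ^ 2 - 12 * b + 9 := by exact_mod_cast hupper
  constructor <;> linarith

theorem stmt10 (a b : ℕ) (hb : 5 ≤ b) (ha2 : 2 ≤ a) (hab : a ≤ b - 2)
    (h : Nat.Coprime a b) :
    ((b : ℚ) ^ 2 - 1) / 8 ≤ (invNum a b : ℚ) ∧
      (invNum a b : ℚ) ≤ (3 * (b : ℚ) ^ 2 - 12 * b + 9) / 8 :=
  stmt10_general a b ha2 hab h
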